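/- Let Π ⊂ ℝ^d (d ≥ 2, 2 ≤ k ≤ d) be a k-dimensional linear subspace, and consider the paraboloid normal map: for x' ∈ ℝ^{d-1}, the upward normal at (x', |x'|²/2) is parallel to (x', −1). Suppose Π ∩ {x_d = −1} = {(y, 𝐚, −1) : y ∈ ℝ^{k-1}} for some 𝐚 ∈ ℝ^{d-k} and, after rotation, 𝐚 = (0, a) ∈ ℝ^{d-k-1}×ℝ. Then the set N^{-1}(Π) of points of the paraboloid whose normal lies in Π is the k−1 dimensional manifold {(y, 0, a, (|y|²+a²)/2) : y ∈ ℝ^{k-1}}, and for ξ = (y, 0, a, (|y|²+a²)/2) ∈ N^{-1}(Π) one has Π ∩ (T_ξ(N^{-1}(Π)) ⊕ span{N(ξ)})^⊥ = {0}, where T_ξ denotes the tangent space and N(ξ) the unit normal to the paraboloid at ξ. -/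

import Mathlib

open MeasureTheory Real

noncomputable section

/-- Ambient space `ℝ^{n+1}` (so `d = n+1`). -/
abbrev Amb (n : ℕ) := EuclideanSpace ℝ (Fin (n + 1))

/-- Build a vector of `ℝ^{n+1}` from coordinates. -/
def mkVec (n : ℕ) (f : Fin (n + 1) → ℝ) : Amb n := (WithLp.equiv 2 _).symm f

/-- The point `ξ(y) = (y, 0, a, (|y|²+a²)/2)` of the paraboloid, `y ∈ ℝ^{k-1}`. -/
def ptP (n k : ℕ) (a : ℝ) (y : Fin (k - 1) → ℝ) : Amb n :=
  mkVec n fun i =>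
    if h : (i : ℕ) < k - 1 then y ⟨i, h⟩
    else if (i : ℕ) = n - 1 then a
    else if (i : ℕ) = n then (∑ j, (y j) ^ 2 + a ^ 2) / 2
    else 0

/-- The (unnormalized) normal `(p', -1)` of the paraboloid over the first `n` coordinates
of `p`. -/
def nvec (n : ℕ) (p : Amb n) : Amb n :=
  mkVec n fun i => if i = Fin.last n then -1 else p i

/-- The vector `w = (0,…,0,a,-1)` (with `a` in position `d-2 = n-1`). -/
def wVec (n : ℕ) (a : ℝ) : Amb n :=
  mkVec n fun i => if i = Fin.last n then -1 else if (i : ℕ) = n - 1 then a else 0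

/-- The `k`-plane `Π = span{e₁,…,e_{k-1}, w}`. -/
def planePi (n k : ℕ) (h : k - 1 ≤ n + 1) (a : ℝ) : Submodule ℝ (Amb n) :=
  Submodule.span ℝ
    (insert (wVec n a)
      {v | ∃ j : Fin (k - 1), v = EuclideanSpace.single (Fin.castLE h j) (1 : ℝ)})

/-- The tangent space `T_{ξ(y)}(N^{-1}(Π)) = span{𝐲_j = e_j + y_j e_d}`. -/
def tangentT (n k : ℕ) (h : k - 1 ≤ n + 1) (y : Fin (k - 1) → ℝ) : Submodule ℝ (Amb n) :=
  Submodule.span ℝ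
    {v | ∃ j : Fin (k - 1),
      v = EuclideanSpace.single (Fin.castLE h j) (1 : ℝ) +
            y j • EuclideanSpace.single (Fin.last n) (1 : ℝ)}

/-!
Every vector of `Π` is `∑ c_j e_j + t w` with `w = (0, …, 0, a, -1)`. A point of the paraboloid
is determined by its normal `(p', -1)`, and comparing last coordinates shows that `(p', -1) ∈ Π`
forces `t = 1`, which yields the parametrization of `N⁻¹(Π)`. If `v = ∑ c_j e_j + t w ∈ Π` is
orthogonal to the tangent vectors `e_j + y_j e_d`, then `c_j = y_j t`; orthogonality to the normal
`∑ y_j e_j + w` then reads `t (|y|² + a² + 1) = 0`, so `t = 0` and `v = 0`.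
-/

open scoped RealInnerProductSpace

def paraboloid (n : ℕ) : Set (Amb n) :=
  {p | p (Fin.last n) = (∑ i, if i = Fin.last n then 0 else p i ^ 2) / 2}

theorem mem_paraboloid {n : ℕ} {p : Amb n} :
    p ∈ paraboloid n ↔ p (Fin.last n) = (∑ i, if i = Fin.last n then 0 else p i ^ 2) / 2 :=
  Iff.rfl

theorem wVec_apply {n : ℕ} (a : ℝ) (i : Fin (n + 1)) :
    wVec n a i = if i = Fin.last n then -1 else if (i : ℕ) = n - 1 then a else 0 := rfl

theorem nvec_apply {n : ℕ} (p : Amb n) (i : Fin (n + 1)) :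
    nvec n p i = if i = Fin.last n then -1 else p i := rfl

theorem ptP_apply {n k : ℕ} (a : ℝ) (y : Fin (k - 1) → ℝ) (i : Fin (n + 1)) :
    ptP n k a y i =
      if h : (i : ℕ) < k - 1 then y ⟨i, h⟩
      else if (i : ℕ) = n - 1 then a
      else if (i : ℕ) = n then (∑ j, y j ^ 2 + a ^ 2) / 2
      else 0 := rfl

theorem wVec_eq_sub {n : ℕ} (hn : 1 ≤ n) (a : ℝ) :
    wVec n a = a • EuclideanSpace.single ⟨n - 1, by omega⟩ (1 : ℝ) -
      EuclideanSpace.single (Fin.last n) (1 : ℝ) := by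
  ext i
  simp only [wVec_apply, PiLp.sub_apply, PiLp.smul_apply, PiLp.single_apply, Fin.ext_iff,
    Fin.val_last]
  split_ifs <;> first | omega | simp

def planeParam (n k : ℕ) (h : k - 1 ≤ n + 1) (a : ℝ) (c : Fin (k - 1) → ℝ) (t : ℝ) : Amb n :=
  ∑ j, c j • EuclideanSpace.single (Fin.castLE h j) (1 : ℝ) + t • wVec n a

section PlaneParam

variable {n k : ℕ} (h : k - 1 ≤ n + 1) (a : ℝ)

theorem mem_planePi_iff {v : Amb n} :
    v ∈ planePi n k h a ↔ ∃ c t, planeParam n k h a c t = v := by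
  have hrange : {v : Amb n | ∃ j : Fin (k - 1),
      v = EuclideanSpace.single (Fin.castLE h j) (1 : ℝ)} =
      Set.range fun j => EuclideanSpace.single (Fin.castLE h j) (1 : ℝ) := by
    ext; simp [eq_comm]
  rw [planePi, hrange, Submodule.mem_span_insert]
  simp only [Submodule.mem_span_range_iff_exists_fun, planeParam]
  constructor
  · rintro ⟨t, _, ⟨c, rfl⟩, rfl⟩
    exact ⟨c, t, add_comm _ _⟩
  · rintro ⟨c, t, rfl⟩
    exact ⟨t, _, ⟨c, rfl⟩, add_comm _ _⟩

theorem planeParam_apply (c : Fin (k - 1) → ℝ) (t : ℝ) (i : Fin (n + 1)) :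
    planeParam n k h a c t i =
      (if hi : (i : ℕ) < k - 1 then c ⟨i, hi⟩ else 0) + t * wVec n a i := by
  simp only [planeParam, PiLp.add_apply, WithLp.ofLp_sum, Finset.sum_apply, PiLp.smul_apply,
    PiLp.single_apply, smul_eq_mul, mul_ite, mul_one, mul_zero]
  congr 1
  split_ifs with hi
  · refine (Finset.sum_eq_single ⟨i, hi⟩ (fun j _ hj => if_neg ?_) (by simp)).trans
      (if_pos rfl)
    rintro rfl
    exact hj rfl
  · refine Finset.sum_eq_zero fun j _ => if_neg ?_
    rintro rfl
    exact hi j.isLt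

variable (hkn : k ≤ n) (c : Fin (k - 1) → ℝ) (t : ℝ)
include hkn

theorem planeParam_apply_castLE (j : Fin (k - 1)) :
    planeParam n k h a c t (Fin.castLE h j) = c j := by
  have := j.isLt
  rw [planeParam_apply, dif_pos (by simp), wVec_apply, if_neg (by simp [Fin.ext_iff]; omega),
    if_neg (by simp; omega)]
  simp

theorem planeParam_apply_secondLast (hn : 1 ≤ n) :
    planeParam n k h a c t ⟨n - 1, by omega⟩ = t * a := by
  rw [planeParam_apply, dif_neg (by simp; omega), wVec_apply,
    if_neg (by simp [Fin.ext_iff]; omega), if_pos rfl, zero_add]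

theorem planeParam_apply_last :
    planeParam n k h a c t (Fin.last n) = -t := by
  rw [planeParam_apply, dif_neg (by simp; omega), wVec_apply, if_pos rfl]
  ring

end PlaneParam

theorem inner_planeParam_left {n k : ℕ} (h : k - 1 ≤ n + 1) (hn : 1 ≤ n) (a : ℝ)
    (c : Fin (k - 1) → ℝ) (t : ℝ) (x : Amb n) :
    ⟪planeParam n k h a c t, x⟫ =
      ∑ j, c j * x (Fin.castLE h j) + t * (a * x ⟨n - 1, by omega⟩ - x (Fin.last n)) := by
  simp only [planeParam, wVec_eq_sub hn, inner_add_left, sum_inner, inner_sub_left,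
    real_inner_smul_left, EuclideanSpace.inner_single_left, map_one, one_mul]

theorem inner_planeParam_self {n k : ℕ} (h : k - 1 ≤ n + 1) (hkn : k ≤ n) (hn : 1 ≤ n)
    (a : ℝ) (c : Fin (k - 1) → ℝ) (t : ℝ) :
    ⟪planeParam n k h a c t, planeParam n k h a c t⟫ = ∑ j, c j ^ 2 + t ^ 2 * (a ^ 2 + 1) := by
  rw [inner_planeParam_left h hn, planeParam_apply_secondLast h a hkn c t hn,
    planeParam_apply_last h a hkn]
  simp only [planeParam_apply_castLE h a hkn, sq]
  ring

theorem nvec_ptP {n k : ℕ} (h : k - 1 ≤ n + 1) (hkn : k ≤ n) (a : ℝ) (y : Fin (k - 1) → ℝ) :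
    nvec n (ptP n k a y) = planeParam n k h a y 1 := by
  ext i
  rw [planeParam_apply]
  simp only [nvec_apply, ptP_apply, wVec_apply, Fin.ext_iff, Fin.val_last]
  split_ifs <;> first | omega | simp

theorem norm_sq_nvec {n : ℕ} (p : Amb n) :
    ‖nvec n p‖ ^ 2 = (∑ i, if i = Fin.last n then 0 else p i ^ 2) + 1 := by
  simp [EuclideanSpace.norm_sq_eq, nvec_apply, Fin.sum_univ_castSucc, Fin.castSucc_ne_last]

theorem ptP_mem_paraboloid {n k : ℕ} (hkn : k ≤ n) (hn : 1 ≤ n) (a : ℝ) (y : Fin (k - 1) → ℝ) :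
    ptP n k a y ∈ paraboloid n := by
  have h : k - 1 ≤ n + 1 := by omega
  have hsum : (∑ i, if i = Fin.last n then 0 else ptP n k a y i ^ 2) = ∑ j, y j ^ 2 + a ^ 2 := by
    have := norm_sq_nvec (ptP n k a y)
    rw [nvec_ptP h hkn, ← real_inner_self_eq_norm_sq, inner_planeParam_self h hkn hn] at this
    linarith
  rw [mem_paraboloid, hsum, ptP_apply, Fin.val_last, dif_neg (by omega), if_neg (by omega), if_pos rfl]

theorem eq_of_nvec_eq {n : ℕ} {p q : Amb n} (hp : p ∈ paraboloid n) (hq : q ∈ paraboloid n)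
    (hpq : nvec n p = nvec n q) : p = q := by
  have hcoord : ∀ i, i ≠ Fin.last n → p i = q i := fun i hi => by
    simpa [nvec_apply, hi] using congrArg (fun v : Amb n => v i) hpq
  ext i
  by_cases hi : i = Fin.last n
  · rw [hi, mem_paraboloid.1 hp, mem_paraboloid.1 hq]
    refine congrArg (· / 2) (Finset.sum_congr rfl fun j _ => ?_)
    split_ifs with hj
    · rfl
    · rw [hcoord j hj]
  · exact hcoord i hi

theorem planePi_inf_orthogonal_eq_bot {n k : ℕ} (h : k - 1 ≤ n + 1) (hkn : k ≤ n) (hn : 1 ≤ n)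
    (a : ℝ) (y : Fin (k - 1) → ℝ) :
    planePi n k h a ⊓ (tangentT n k h y ⊔ Submodule.span ℝ {nvec n (ptP n k a y)})ᗮ = ⊥ := by
  refine (Submodule.eq_bot_iff _).2 fun v hv => ?_
  obtain ⟨hv_plane, hv_orth⟩ := Submodule.mem_inf.1 hv
  obtain ⟨c, t, rfl⟩ := (mem_planePi_iff h a).1 hv_plane
  have hc : ∀ j, c j = y j * t := fun j => by
    have := (Submodule.mem_orthogonal _ _).1 hv_orth _
      (Submodule.mem_sup_left (Submodule.subset_span ⟨j, rfl⟩))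
    rw [inner_add_left, real_inner_smul_left, EuclideanSpace.inner_single_left,
      EuclideanSpace.inner_single_left, planeParam_apply_castLE h a hkn,
      planeParam_apply_last h a hkn] at this
    simp only [map_one, one_mul] at this
    linarith
  have hnormal : t * (∑ j, y j ^ 2 + a ^ 2 + 1) = 0 := by
    have := (Submodule.mem_orthogonal _ _).1 hv_orth _
      (Submodule.mem_sup_right (Submodule.mem_span_singleton_self _))
    rw [nvec_ptP h hkn, inner_planeParam_left h hn, planeParam_apply_secondLast h a hkn c t hn,
      planeParam_apply_last h a hkn] at this
    simp only [planeParam_apply_castLE h a hkn, hc] at this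
    have hsum : ∑ j, y j * (y j * t) = t * ∑ j, y j ^ 2 := by
      rw [Finset.mul_sum]
      exact Finset.sum_congr rfl fun j _ => by ring
    linear_combination this - hsum
  have ht : t = 0 := (mul_eq_zero.1 hnormal).resolve_right (by positivity)
  have hc0 : c = 0 := funext fun j => by simp [hc, ht]
  simp [planeParam, ht, hc0]

/-- the set of points of the paraboloid whose normal lies in `Π` is exactly
`{(y,0,a,(|y|²+a²)/2) : y ∈ ℝ^{k-1}}`, and at each such point `ξ` one has
`Π ∩ (T_ξ(N^{-1}(Π)) ⊕ span{N(ξ)})^⊥ = {0}` (transversality). -/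
theorem stmt7 (n k : ℕ) (hk : 2 ≤ k) (hkn : k ≤ n) (a : ℝ) :
    ({p : Amb n |
        p (Fin.last n) = (∑ i, if i = Fin.last n then 0 else (p i) ^ 2) / 2 ∧
        nvec n p ∈ planePi n k (by omega) a} =
      {p : Amb n | ∃ y : Fin (k - 1) → ℝ, p = ptP n k a y}) ∧
    ∀ y : Fin (k - 1) → ℝ,
      planePi n k (by omega) a ⊓
          (tangentT n k (by omega) y ⊔
            Submodule.span ℝ {nvec n (ptP n k a y)})ᗮ = ⊥ := by
  have h : k - 1 ≤ n + 1 := by omega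
  have hn : 1 ≤ n := by omega
  refine ⟨Set.ext fun p => ⟨?_, ?_⟩, planePi_inf_orthogonal_eq_bot h hkn hn a⟩
  · rintro ⟨hp, hnormal⟩
    obtain ⟨c, t, hct⟩ := (mem_planePi_iff h a).1 hnormal
    have ht : t = 1 := by
      simpa [planeParam_apply_last h a hkn, nvec_apply] using
        congrArg (fun v : Amb n => v (Fin.last n)) hct
    subst ht
    exact ⟨c, eq_of_nvec_eq hp (ptP_mem_paraboloid hkn hn a c) (by rw [← hct, nvec_ptP h hkn])⟩
  · rintro ⟨y, rfl⟩
    exact ⟨ptP_mem_paraboloid hkn hn a y,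
      (mem_planePi_iff h a).2 ⟨y, 1, (nvec_ptP h hkn a y).symm⟩⟩
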